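/- Any class 𝔉 of graphs of size λ with Forb_λ(P_ω) ⊆ 𝔉 ⊆ Forb^ind_λ(R) has cofinality (with respect to induced-subgraph embeddability) at least λ⁺: no family of fewer than λ⁺ members of 𝔉 is cofinal, i.e., for every family {H_i : i ∈ I} ⊆ 𝔉 with |I| ≤ λ there exists G' ∈ 𝔉 embedding into no H_i. -/

import Mathlib

open Cardinal Ordinal

/-- The poset `T α`: strictly decreasing finite lists of ordinals `< α`, ordered by
reverse strict-prefix; the empty list is the top element, and the lists starting with `β`
form the copy of `T β`. -/
def TT (α : Ordinal) : Type 1 :=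
  {l : List Ordinal // l.Pairwise (· > ·) ∧ ∀ x ∈ l, x < α}

instance instPOTT (α : Ordinal) : PartialOrder (TT α) where
  le u v := v.1 <+: u.1
  le_refl u := List.prefix_refl _
  le_trans _ _ _ h1 h2 := List.IsPrefix.trans h2 h1
  le_antisymm _ _ h1 h2 :=
    Subtype.ext (List.IsPrefix.eq_of_length h2 ((List.IsPrefix.length_le h2).antisymm (List.IsPrefix.length_le h1)))

/-- The top element of `T α`. -/
def topT (α : Ordinal) : TT α := ⟨[], by simp, by simp⟩

/-- The rank function of the reversed order `⟨T α, >⟩`. -/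
def dT {α : Ordinal} (v : TT α) : ℕ := v.1.length

/-- The rank function of `⟨T α, <⟩`; the top element has rank `α`. -/
def rT {α : Ordinal} (v : TT α) : Ordinal := v.1.getLastD α

/-- The graph `G_α` on `T α`: `u ~ v` iff `u, v` are comparable and `d u ~_G d v`. -/
def Gg (G : SimpleGraph ℕ) (α : Ordinal) : SimpleGraph (TT α) where
  Adj u v := u ≠ v ∧ (u ≤ v ∨ v ≤ u) ∧ G.Adj (dT u) (dT v)
  symm := ⟨fun _ _ h => ⟨Ne.symm h.1, h.2.1.symm, h.2.2.symm⟩⟩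
  loopless := ⟨fun _ h => h.1 rfl⟩

/-- The one-way infinite path `P_ω` on `ℕ`. -/
def rayG : SimpleGraph ℕ := SimpleGraph.fromRel (fun m n => n = m + 1)

/-- `A` is a (not necessarily induced) subgraph of `B`. -/
def SubCopy {X Y : Type*} (A : SimpleGraph X) (B : SimpleGraph Y) : Prop :=
  ∃ f : X ↪ Y, ∀ u v, A.Adj u v → B.Adj (f u) (f v)

/-- `R` is (isomorphic to) the countable random graph: the extension property. -/
def IsRado (R : SimpleGraph ℕ) : Prop :=
  ∀ A B : Finset ℕ, Disjoint A B →
    ∃ v, v ∉ A ∧ v ∉ B ∧ (∀ a ∈ A, R.Adj v a) ∧ (∀ b ∈ B, ¬R.Adj v b)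

/-- An `(s, ξ)`-embedding: an induced embedding of some `G_α`, `ξ ≤ α < λ⁺`, into `H`
whose image contains `s` as the top part of a chain with `d`-values `0, …, n` and whose
last vertex has rank `> ξ`. -/
def IsSXEmb {V : Type} (G : SimpleGraph ℕ) (lam : Cardinal) (H : SimpleGraph V)
    (s : List V) (ξ : Ordinal) : Prop :=
  ∃ α : Ordinal, ξ ≤ α ∧ α < (Order.succ lam).ord ∧
    ∃ (f : Gg G α ↪g H) (t : List (TT α)),
      s = t.map ⇑f ∧
      (∀ i : Fin t.length, dT (t.get i) = i.1) ∧
      (∀ u ∈ t, ∀ v ∈ t, u ≤ v ∨ v ≤ u) ∧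
      (∀ v ∈ t.getLast?, ξ < rT v)

/-- The set `U` of finite sequences admitting `(s, ξ)`-embeddings for all `ξ < λ⁺`. -/
def UU {V : Type} (G : SimpleGraph ℕ) (lam : Cardinal) (H : SimpleGraph V) :
    Set (List V) :=
  {s | ∀ ξ < (Order.succ lam).ord, IsSXEmb G lam H s ξ}

/-!
Fix a countable random graph `R` and let `G_α = Gg R α` for `α < λ⁺`. Adjacent vertices of
`G_α` are comparable in the tree `T α`, whose branches are finite (they are decreasing
sequences of ordinals), so `G_α` contains no ray; it has at most `λ` vertices, so a copy of it
on `V` lies in `𝔉`.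

Conversely, if `G_α` embeds into `H` for cofinally many `α < λ⁺`, then so does `R`. Call a
finite sequence of vertices of `H` good (the set `UU`) if for every `ξ < λ⁺` it is the image of
the top part of a chain, with depths `0, …, n`, in an embedded `G_α` whose last vertex has rank
`> ξ`. A good sequence has a good one-vertex extension: a chain can always be prolonged at the
cost of lowering `ξ` by one, and as `|H| ≤ λ < cf λ⁺` a single new vertex serves every `ξ`. The
infinite sequence so obtained induces `R`, since its `n`-th vertex has depth `n`.

Hence each `H_i` admits `G_α` only for `α` below some `β_i < λ⁺`, and by regularity of `λ⁺`,
`α = sup β_i` yields a member of `𝔉` embedding into no `H_i`.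
-/

def ackermannGraph : SimpleGraph ℕ where
  Adj m n := m.testBit n ∨ n.testBit m
  symm := ⟨fun _ _ => Or.symm⟩
  loopless := ⟨fun _ h => by simp [Nat.testBit_lt_two_pow Nat.lt_two_pow_self] at h⟩

theorem Nat.testBit_sum_two_pow (s : Finset ℕ) (j : ℕ) :
    (∑ i ∈ s, 2 ^ i).testBit j = true ↔ j ∈ s := by
  rw [← Nat.mem_bitIndices, ← List.mem_toFinset, Finset.toFinset_bitIndices_sum_two_pow]

theorem isRado_ackermannGraph : IsRado ackermannGraph := by
  intro A B hAB
  set N := (A ∪ B).sup id + 1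
  have hN : ∀ x ∈ A ∪ B, x < N := fun x hx => Nat.lt_succ_of_le (Finset.le_sup (f := id) hx)
  -- `v` codes the set `A ∪ {N}`; the extra bit `N` makes `v` larger than everything in `A ∪ B`.
  set v := ∑ i ∈ insert N A, 2 ^ i
  have hv : ∀ j, v.testBit j = true ↔ j ∈ insert N A := Nat.testBit_sum_two_pow _
  have hlt : ∀ x ∈ A ∪ B, x < v := fun x hx =>
    (hN x hx).trans (Nat.lt_two_pow_self.trans_le (Nat.ge_two_pow_of_testBit ((hv N).2 (by simp))))
  refine ⟨v, fun h => (hlt v (by simp [h])).false, fun h => (hlt v (by simp [h])).false,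
    fun a ha => Or.inl ((hv a).2 (by simp [ha])), fun b hb hvb => ?_⟩
  rcases hvb with h | h
  · rcases Finset.mem_insert.1 ((hv b).1 h) with rfl | hbA
    · exact (hN _ (by simp [hb])).false
    · exact Finset.disjoint_left.1 hAB hbA hb
  · exact (Nat.lt_two_pow_self.trans_le (Nat.ge_two_pow_of_testBit h)).not_gt (hlt b (by simp [hb]))

namespace TT

variable {α : Ordinal}

theorem le_iff_isPrefix {u v : TT α} : u ≤ v ↔ v.1 <+: u.1 := Iff.rfl

def cons {β : Ordinal} (hβ : β < α) (v : TT β) : TT α :=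
  ⟨β :: v.1, List.pairwise_cons.2 ⟨v.2.2, v.2.1⟩,
    List.forall_mem_cons.2 ⟨hβ, fun x hx => (v.2.2 x hx).trans hβ⟩⟩

theorem cons_le_cons_iff {β : Ordinal} (hβ : β < α) {v w : TT β} :
    cons hβ v ≤ cons hβ w ↔ v ≤ w :=
  show β :: w.1 <+: β :: v.1 ↔ w.1 <+: v.1 by simp

theorem exists_eq_cons {u : TT α} {β : Ordinal} {l : List Ordinal} (hu : u.1 = β :: l) :
    ∃ (hβ : β < α) (v : TT β), u = cons hβ v := by
  have hpw := u.2.1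
  rw [hu, List.pairwise_cons] at hpw
  exact ⟨u.2.2 β (by simp [hu]), ⟨l, hpw.2, hpw.1⟩, Subtype.ext hu⟩

theorem exists_eq_cons_of_comparable (u : ℕ → TT α)
    (hu : ∀ n, u n ≤ u (n + 1) ∨ u (n + 1) ≤ u n) (hne : ∀ n, (u n).1 ≠ []) :
    ∃ (β : Ordinal) (hβ : β < α) (v : ℕ → TT β), ∀ n, u n = cons hβ (v n) := by
  obtain ⟨β, l, hβl⟩ := List.exists_cons_of_ne_nil (hne 0)
  have hhead : ∀ n, ∃ l, (u n).1 = β :: l := by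
    intro n
    induction n with
    | zero => exact ⟨l, hβl⟩
    | succ n ihn =>
      obtain ⟨l, hl⟩ := ihn
      obtain ⟨γ, l', hl'⟩ := List.exists_cons_of_ne_nil (hne (n + 1))
      have hγ : β = γ := by
        rcases hu n with h | h <;> rw [le_iff_isPrefix, hl, hl', List.cons_prefix_cons] at h
        exacts [h.1.symm, h.1]
      exact ⟨l', hγ ▸ hl'⟩
  obtain ⟨hβ, -⟩ := exists_eq_cons hβl
  have hcons : ∀ n, ∃ w : TT β, u n = cons hβ w := fun n => by
    obtain ⟨_, hl⟩ := hhead n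
    obtain ⟨_, hw⟩ := exists_eq_cons hl
    exact hw
  choose v hv using hcons
  exact ⟨β, hβ, v, hv⟩

theorem not_injective_of_comparable (u : ℕ → TT α)
    (hu : ∀ n, u n ≤ u (n + 1) ∨ u (n + 1) ≤ u n) : ¬ Function.Injective u := by
  induction α using WellFoundedLT.induction with
  | _ α ih =>
  intro hinj
  obtain ⟨N, hN⟩ : ∃ N, ∀ n, (u (N + n)).1 ≠ [] := by
    by_cases h : ∃ k, (u k).1 = []
    · obtain ⟨k, hk⟩ := h
      exact ⟨k + 1, fun n hn => by have := hinj (Subtype.ext (hn.trans hk.symm)); omega⟩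
    · exact ⟨0, fun n => not_exists.1 h _⟩
  obtain ⟨β, hβ, v, hv⟩ :=
    exists_eq_cons_of_comparable (fun n => u (N + n)) (fun n => hu (N + n)) hN
  refine ih β hβ v (fun n => ?_) (fun m n h => ?_)
  · have h := hu (N + n)
    rwa [show N + n + 1 = N + (n + 1) from rfl, hv, hv, cons_le_cons_iff, cons_le_cons_iff] at h
  · have := hinj ((hv m).trans ((congrArg (cons hβ) h).trans (hv n).symm))
    omega

theorem mk_le : #(TT α) ≤ max ℵ₀ (Cardinal.lift.{1} α.card) := by
  rw [← Cardinal.mk_Iio_ordinal]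
  refine le_trans ?_ (Cardinal.mk_list_le_max _)
  refine Cardinal.mk_le_of_injective
    (f := fun u => u.1.attachWith _ fun x hx => Set.mem_Iio.2 (u.2.2 x hx)) fun u v h => ?_
  exact Subtype.ext (by simpa using congrArg List.unattach h)

theorem nonempty_embedding {V : Type} {lam : Cardinal} (hlam : ℵ₀ ≤ lam) (hV : lam ≤ #V)
    (hα : α < (Order.succ lam).ord) : Nonempty (TT α ↪ V) := by
  have hcard : α.card ≤ lam := Order.lt_succ_iff.1 (Cardinal.lt_ord.1 hα)
  refine Cardinal.lift_mk_le'.1 ((Cardinal.lift_uzero _).trans_le (mk_le.trans (max_le ?_ ?_)))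
  · simpa using hlam.trans hV
  · exact Cardinal.lift_le.2 (hcard.trans hV)

theorem rT_le (w : TT α) : rT w ≤ α := by
  rcases List.eq_nil_or_concat' w.1 with h | ⟨l, b, h⟩
  · simp [rT, h]
  · simpa [rT, h] using (w.2.2 b (by simp [h])).le

theorem rT_le_of_mem {w : TT α} {x : Ordinal} (hx : x ∈ w.1) : rT w ≤ x := by
  rcases List.eq_nil_or_concat' w.1 with h | ⟨l, b, h⟩
  · simp [h] at hx
  · have hpw := w.2.1
    simp only [h, List.pairwise_append, List.mem_append, List.mem_singleton] at hpw hx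
    simp only [rT, h, List.getLastD_concat]
    rcases hx with hx | rfl
    exacts [(hpw.2.2 x hx b rfl).le, le_rfl]

def snoc (w : TT α) {γ : Ordinal} (hγ : γ < rT w) : TT α :=
  ⟨w.1 ++ [γ], List.pairwise_append.2 ⟨w.2.1, by simp, fun x hx _ hy => by
      simpa [List.mem_singleton.1 hy] using hγ.trans_le (rT_le_of_mem hx)⟩,
    fun x hx => by
      rcases List.mem_append.1 hx with hx | hx
      exacts [w.2.2 x hx, List.mem_singleton.1 hx ▸ hγ.trans_le (rT_le w)]⟩

theorem snoc_le (w : TT α) {γ : Ordinal} (hγ : γ < rT w) : snoc w hγ ≤ w :=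
  List.prefix_append _ _

theorem dT_snoc (w : TT α) {γ : Ordinal} (hγ : γ < rT w) : dT (snoc w hγ) = dT w + 1 :=
  List.length_append ..

theorem rT_snoc (w : TT α) {γ : Ordinal} (hγ : γ < rT w) : rT (snoc w hγ) = γ :=
  List.getLastD_concat

theorem le_of_comparable_of_dT_le {u w : TT α} (h : u ≤ w ∨ w ≤ u) (hd : dT u ≤ dT w) :
    w ≤ u := by
  rcases h with h | h
  · exact le_of_eq (show w = u from Subtype.ext (h.eq_of_length_le hd))
  · exact h

end TT

theorem not_subCopy_rayG_map_Gg {W : Type*} (G : SimpleGraph ℕ) {α : Ordinal} (e : TT α ↪ W) :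
    ¬ SubCopy rayG ((Gg G α).map e) := by
  rintro ⟨f, hf⟩
  have hadj n : ∃ x y, (Gg G α).Adj x y ∧ e x = f n ∧ e y = f (n + 1) :=
    (SimpleGraph.map_adj _ _ _ _).1 (hf n (n + 1) (by simp [rayG]))
  choose x y hxy hx hy using hadj
  have hyx n : y n = x (n + 1) := e.injective ((hy n).trans (hx (n + 1)).symm)
  refine TT.not_injective_of_comparable x (fun n => hyx n ▸ (hxy n).2.1) fun m n h => ?_
  exact f.injective ((hx m).symm.trans (h ▸ hx n))

theorem List.map_eq_range_length_iff {β : Type*} (d : β → ℕ) (t : List β) :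
    t.map d = List.range t.length ↔ ∀ i : Fin t.length, d (t.get i) = i := by
  refine ⟨fun h i => by simpa using congrArg (·[i.1]?) h, fun h => ?_⟩
  exact List.ext_getElem (by simp) fun i hi _ => by simpa using h ⟨i, by simpa using hi⟩

section Ordinal

variable {lam : Cardinal}

theorem add_one_lt_ord_succ (hlam : ℵ₀ ≤ lam) {ξ : Ordinal} (hξ : ξ < (Order.succ lam).ord) :
    ξ + 1 < (Order.succ lam).ord :=
  Order.succ_eq_add_one ξ ▸ (Cardinal.isSuccLimit_ord (hlam.trans (Order.le_succ lam))).succ_lt hξ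

theorem iSup_lt_ord_succ {ι : Type} (hlam : ℵ₀ ≤ lam) (hι : #ι ≤ lam) {f : ι → Ordinal}
    (hf : ∀ i, f i < (Order.succ lam).ord) : ⨆ i, f i < (Order.succ lam).ord := by
  refine Ordinal.iSup_lt_of_lt_cof ?_ hf
  rw [(Cardinal.isRegular_succ hlam).cof_ord]
  exact hι.trans_lt (Order.lt_succ lam)

end Ordinal

theorem exists_seq_forall_map_range_mem {β : Type*} {S : Set (List β)} (hnil : [] ∈ S)
    (hstep : ∀ s ∈ S, ∃ b, s ++ [b] ∈ S) : ∃ v : ℕ → β, ∀ n, (List.range n).map v ∈ S := by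
  choose next hnext using hstep
  let q : ℕ → S := fun n => n.rec ⟨[], hnil⟩ fun _ s => ⟨s.1 ++ [next s.1 s.2], hnext _ s.2⟩
  refine ⟨fun n => next (q n).1 (q n).2, fun n => ?_⟩
  suffices h : (q n).1 = (List.range n).map fun n => next (q n).1 (q n).2 from h ▸ (q n).2
  induction n with
  | zero => rfl
  | succ n ih => simp [q, List.range_succ, ← ih]

section SXEmb

variable {V : Type} {G : SimpleGraph ℕ} {lam : Cardinal} {H : SimpleGraph V}

theorem isSXEmb_iff {s : List V} {ξ : Ordinal} :
    IsSXEmb G lam H s ξ ↔ ∃ α : Ordinal, ξ ≤ α ∧ α < (Order.succ lam).ord ∧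
      ∃ (f : Gg G α ↪g H) (t : List (TT α)), s = t.map f ∧ t.map dT = List.range t.length ∧
        (∀ u ∈ t, ∀ v ∈ t, u ≤ v ∨ v ≤ u) ∧ ∀ v ∈ t.getLast?, ξ < rT v := by
  simp only [IsSXEmb, List.map_eq_range_length_iff]

theorem IsSXEmb.mono {s : List V} {ξ ξ' : Ordinal} (h : IsSXEmb G lam H s ξ) (hle : ξ' ≤ ξ) :
    IsSXEmb G lam H s ξ' := by
  obtain ⟨α, hξα, hα, f, t, hs, hd, ht, hlast⟩ := h
  exact ⟨α, hle.trans hξα, hα, f, t, hs, hd, ht, fun v hv => hle.trans_lt (hlast v hv)⟩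

theorem isSXEmb_append_singleton {s : List V} {ξ α : Ordinal} (hξα : ξ ≤ α)
    (hα : α < (Order.succ lam).ord) (f : Gg G α ↪g H) {t : List (TT α)} (hs : s = t.map f)
    (hd : t.map dT = List.range t.length) (ht : ∀ u ∈ t, ∀ v ∈ t, u ≤ v ∨ v ≤ u) {u : TT α}
    (hdu : dT u = t.length) (hu : ∀ x ∈ t, u ≤ x) (hξu : ξ < rT u) :
    IsSXEmb G lam H (s ++ [f u]) ξ := by
  refine isSXEmb_iff.2 ⟨α, hξα, hα, f, t ++ [u], by simp [hs], by simp [hd, hdu, List.range_succ],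
    ?_, by simpa using hξu⟩
  simp only [List.mem_append, List.mem_singleton]
  rintro x (hx | rfl) y (hy | rfl)
  exacts [ht x hx y hy, Or.inr (hu x hx), Or.inl (hu y hy), Or.inl le_rfl]

/-- The rank bound `ξ + 1` leaves room below the last vertex for a child of rank `ξ + 1`. -/
theorem IsSXEmb.exists_append_singleton {s : List V} {ξ : Ordinal}
    (h : IsSXEmb G lam H s (ξ + 1)) : ∃ v, IsSXEmb G lam H (s ++ [v]) ξ := by
  obtain ⟨α, hξα, hα, f, t, hs, hd, ht, hlast⟩ := isSXEmb_iff.1 h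
  have hξ : ξ < ξ + 1 := lt_add_one ξ
  rcases List.eq_nil_or_concat' t with rfl | ⟨t, w, rfl⟩
  · exact ⟨f (topT α), isSXEmb_append_singleton (hξ.le.trans hξα) hα f hs hd ht rfl (by simp)
      (hξ.trans_le hξα)⟩
  have hw : ξ + 1 < rT w := hlast w (by simp)
  have hdw : dT w = t.length := by simpa [List.range_succ] using congrArg List.getLast? hd
  have hdt : ∀ x ∈ t ++ [w], dT x ≤ dT w := fun x hx => by
    have : dT x ∈ List.range (t ++ [w]).length := hd ▸ List.mem_map_of_mem hx
    simp only [List.mem_range, List.length_append, List.length_singleton] at this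
    omega
  refine ⟨f (w.snoc hw), isSXEmb_append_singleton (hξ.le.trans hξα) hα f hs hd ht
    (by simp [TT.dT_snoc, hdw]) (fun x hx => ?_) (by rw [TT.rT_snoc]; exact hξ)⟩
  exact (TT.snoc_le w hw).trans (TT.le_of_comparable_of_dT_le (ht x hx w (by simp)) (hdt x hx))

theorem IsSXEmb.getElem_adj_iff {s : List V} {ξ : Ordinal} (h : IsSXEmb G lam H s ξ) {i j : ℕ}
    (hi : i < s.length) (hj : j < s.length) (hij : i ≠ j) :
    s[i] ≠ s[j] ∧ (H.Adj s[i] s[j] ↔ G.Adj i j) := by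
  obtain ⟨α, -, -, f, t, rfl, hd, ht, -⟩ := isSXEmb_iff.1 h
  simp only [List.length_map] at hi hj
  have hdt : ∀ k (hk : k < t.length), dT t[k] = k := fun k hk => by
    simpa [hk] using congrArg (·[k]?) hd
  have hne : t[i] ≠ t[j] := fun he => hij (by rw [← hdt i hi, ← hdt j hj, he])
  simp only [List.getElem_map, f.injective.ne_iff, f.map_adj_iff]
  refine ⟨hne, ?_⟩
  simp only [Gg, hdt]
  exact ⟨fun h => h.2.2, fun h => ⟨hne, ht _ (List.getElem_mem _) _ (List.getElem_mem _), h⟩⟩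

theorem nil_mem_UU (hub : ∀ ξ < (Order.succ lam).ord,
      ∃ α, ξ ≤ α ∧ α < (Order.succ lam).ord ∧ Nonempty (Gg G α ↪g H)) :
    [] ∈ UU G lam H := by
  intro ξ hξ
  obtain ⟨α, hξα, hα, ⟨f⟩⟩ := hub ξ hξ
  exact isSXEmb_iff.2 ⟨α, hξα, hα, f, [], rfl, rfl, by simp, by simp⟩

theorem exists_append_singleton_mem_UU (hlam : ℵ₀ ≤ lam) (hV : #V ≤ lam) {s : List V}
    (hs : s ∈ UU G lam H) : ∃ v, s ++ [v] ∈ UU G lam H := by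
  by_contra! hcon
  -- Each `v` fails at some level below `λ⁺`; by regularity, one level lies above all of them.
  have hbad v : ∃ ξ < (Order.succ lam).ord, ¬ IsSXEmb G lam H (s ++ [v]) ξ := by
    simpa [UU] using hcon v
  choose ξ hξL hξ using hbad
  have hsup := iSup_lt_ord_succ hlam hV hξL
  obtain ⟨v, hv⟩ := (hs _ (add_one_lt_ord_succ hlam hsup)).exists_append_singleton
  exact hξ v (hv.mono (Ordinal.le_iSup ξ v))

theorem nonempty_embedding_of_forall_exists_Gg (hlam : ℵ₀ ≤ lam) (hV : #V ≤ lam)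
    (hub : ∀ ξ < (Order.succ lam).ord,
      ∃ α, ξ ≤ α ∧ α < (Order.succ lam).ord ∧ Nonempty (Gg G α ↪g H)) :
    Nonempty (G ↪g H) := by
  obtain ⟨v, hv⟩ := exists_seq_forall_map_range_mem (nil_mem_UU hub)
    fun s hs => exists_append_singleton_mem_UU hlam hV hs
  have hL : (0 : Ordinal) < (Order.succ lam).ord :=
    (Cardinal.isSuccLimit_ord (hlam.trans (Order.le_succ lam))).pos
  have key : ∀ i j, i ≠ j → v i ≠ v j ∧ (H.Adj (v i) (v j) ↔ G.Adj i j) := fun i j hij => by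
    simpa using (hv (max i j + 1) 0 hL).getElem_adj_iff (by simp) (by simp) hij
  refine ⟨⟨⟨v, fun i j h => not_not.1 fun hij => (key i j hij).1 h⟩, fun {i j} => ?_⟩⟩
  rcases eq_or_ne i j with rfl | hij
  · simp
  · exact (key i j hij).2

end SXEmb

/-- any class `𝔉` with `Forb_λ(P_ω) ⊆ 𝔉 ⊆ Forb^ind_λ(R)` has cofinality
at least `λ⁺`: no family of at most `λ` members is cofinal. -/
theorem stmt15 {V : Type} (lam : Cardinal) (hlam : Cardinal.aleph0 ≤ lam)
    (hV : Cardinal.mk V = lam) (F : Set (SimpleGraph V))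
    (hForb : ∀ G : SimpleGraph V, ¬ SubCopy rayG G → G ∈ F)
    (hInd : ∀ H ∈ F, ∀ R : SimpleGraph ℕ, IsRado R → ¬ Nonempty (R ↪g H))
    (I : Type) (hI : Cardinal.mk I ≤ lam) (Hs : I → SimpleGraph V)
    (hHs : ∀ i, Hs i ∈ F) :
    ∃ G' ∈ F, ∀ i, ¬ Nonempty (G' ↪g Hs i) := by
  have hbound i : ∃ b < (Order.succ lam).ord, ∀ α, b ≤ α → α < (Order.succ lam).ord →
      ¬ Nonempty (Gg ackermannGraph α ↪g Hs i) := by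
    by_contra! h
    exact hInd _ (hHs i) _ isRado_ackermannGraph
      (nonempty_embedding_of_forall_exists_Gg hlam hV.le h)
  choose b hbL hb using hbound
  have hα := iSup_lt_ord_succ hlam hI hbL
  obtain ⟨e⟩ := TT.nonempty_embedding hlam hV.ge hα
  refine ⟨(Gg ackermannGraph _).map e, hForb _ (not_subCopy_rayG_map_Gg _ e), fun i ⟨g⟩ => ?_⟩
  exact hb i _ (Ordinal.le_iSup b i) hα ⟨(SimpleGraph.Embedding.map e _).trans g⟩
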